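/- Fix an integer K ≥ 1 and a real number p ∈ (0,1], and let A = A(p,K) be the (2K+2)×(2K+2) real matrix described in the context. Then the characteristic polynomial of A satisfies det(λI − A) = λ^{K+1} (λ+1)^K (λ − (2p−1)); in particular the eigenvalues of A are 2p−1 (simple when p ≠ 1/2 and p ≠ 0), 0 with algebraic multiplicity K+1, and −1 with algebraic multiplicity K. -/

import Mathlib

open MeasureTheory ProbabilityTheory Filter Matrix Asymptotics
open scoped ENNReal NNReal Topology

noncomputable section

namespace PolyaUrnPaper

/-- The state space of a `q`-colour urn: vectors in `ℝ^q` with the Euclidean norm. -/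
abbrev E (q : ℕ) := EuclideanSpace ℝ (Fin q)

/-- The complexified state space `ℂ^q` with the Euclidean norm. -/
abbrev EC (q : ℕ) := EuclideanSpace ℂ (Fin q)

variable {q : ℕ}

/-- Total activity `a · x` of a composition vector `x`. -/
def totAct (a : Fin q → ℝ) (x : E q) : ℝ := ∑ i, a i * x i

/-- Coordinatewise complexification of a real vector. -/
def toC (x : E q) : EC q := WithLp.toLp 2 fun i => (x i : ℂ)

variable {Ω : Type*} [MeasurableSpace Ω]

/-- The σ-field `ℱ_n` generated by `X_1, …, X_n`. -/
def urnFiltration (X : ℕ → Ω → E q) (n : ℕ) : MeasurableSpace Ω :=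
  ⨆ k ∈ Finset.Icc 1 n, MeasurableSpace.comap (X k) inferInstance

/-- The total activity process `S_n = a · X_n`. -/
def Sproc (a : Fin q → ℝ) (X : ℕ → Ω → E q) (n : ℕ) (ω : Ω) : ℝ := totAct a (X n ω)

/-- The increment `ΔX_n = X_{n+1} - X_n`. -/
def ΔX (X : ℕ → Ω → E q) (n : ℕ) (ω : Ω) : E q := X (n + 1) ω - X n ω

/-- The event `E_n^c` of non-extinction up to time `n`. -/
def NE (a : Fin q → ℝ) (X : ℕ → Ω → E q) (n : ℕ) : Set Ω :=
  {ω | ∀ k ≤ n, 0 < Sproc a X k ω}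

/-- The event of non-extinction (at all times). -/
def NEinf (a : Fin q → ℝ) (X : ℕ → Ω → E q) : Set Ω :=
  {ω | ∀ k, 0 < Sproc a X k ω}

/-- A generalized Pólya urn process: `P` is a probability measure, `a` the (nonnegative)
activity vector, `ξ i` the law of the replacement vector for colour `i`, `X₀` the non-random
initial composition with `a · X₀ > 0`, and `X` the urn process.  The `dynamics` field states
that conditionally on `ℱ_n`, on the event `S_n > 0` the increment `ΔX_n` is distributed
as the mixture `∑ i (a_i X_{n,i}/S_n) ξ_i` (drawing colour `i` with probability
`a_i X_{n,i}/S_n` and then using law `ξ_i`, independently of the past), and `ΔX_n = 0`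
on the event `S_n = 0`. -/
structure IsPolyaUrn (P : Measure Ω) (a : Fin q → ℝ) (ξ : Fin q → Measure (E q))
    (X₀ : E q) (X : ℕ → Ω → E q) : Prop where
  probP : IsProbabilityMeasure P
  probξ : ∀ i, IsProbabilityMeasure (ξ i)
  ha : ∀ i, 0 ≤ a i
  hX₀nonneg : ∀ i, 0 ≤ X₀ i
  haX₀ : 0 < totAct a X₀
  hX0 : ∀ ω, X 0 ω = X₀
  measX : ∀ n, Measurable (X n)
  dynamics : ∀ n, ∀ B : Set (E q), MeasurableSet B →
    ∀ᵐ ω ∂P,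
      (P[fun ω' => B.indicator (fun _ => (1 : ℝ)) (ΔX X n ω') | urnFiltration X n]) ω =
        if 0 < Sproc a X n ω then
          ∑ i, (a i * X n ω i / Sproc a X n ω) * (ξ i B).toReal
        else B.indicator (fun _ => (1 : ℝ)) 0

/-- Tenability: almost surely all coordinates of `X_n` are nonnegative for all `n`. -/
def Tenable (P : Measure Ω) (X : ℕ → Ω → E q) : Prop :=
  ∀ n, ∀ᵐ ω ∂P, ∀ i, 0 ≤ X n ω i

/-- The urn is balanced in expectation with constant `b`:
`a · E ξ_i = b` for every colour `i` with positive activity. -/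
def BalancedInExp (a : Fin q → ℝ) (ξ : Fin q → Measure (E q)) (b : ℝ) : Prop :=
  ∀ i, 0 < a i → ∫ x, totAct a x ∂(ξ i) = b

/-- The intensity matrix `A = (a_j E ξ_{j,i})_{i,j}`. -/
def intensity (a : Fin q → ℝ) (ξ : Fin q → Measure (E q)) : Matrix (Fin q) (Fin q) ℝ :=
  Matrix.of fun i j => a j * ∫ x, x i ∂(ξ j)

/-- The intensity matrix viewed as a complex matrix. -/
def intensityC (a : Fin q → ℝ) (ξ : Fin q → Measure (E q)) : Matrix (Fin q) (Fin q) ℂ :=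
  (intensity a ξ).map Complex.ofReal

/-- The largest eigenvalue `λ₁` of `A` equals `b`: `b` is an eigenvalue and it dominates
the real parts of all eigenvalues. -/
def LambdaOneIs (A : Matrix (Fin q) (Fin q) ℂ) (b : ℝ) : Prop :=
  (b : ℂ) ∈ spectrum ℂ A ∧ ∀ μ ∈ spectrum ℂ A, μ.re ≤ b

/-- Condition `U(p)`: the urn is tenable and balanced in expectation with `λ₁ = b > 0`,
and `E|ξ_i|^p < ∞` for all colours `i`. -/
def CondU (P : Measure Ω) (a : Fin q → ℝ) (ξ : Fin q → Measure (E q))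
    (X₀ : E q) (X : ℕ → Ω → E q) (b : ℝ) (p : ℝ) : Prop :=
  IsPolyaUrn P a ξ X₀ X ∧ Tenable P X ∧ BalancedInExp a ξ b ∧ 0 < b ∧
    LambdaOneIs (intensityC a ξ) b ∧
    ∀ i, ∫⁻ x, (‖x‖₊ : ℝ≥0∞) ^ p ∂(ξ i) < ∞

/-- `Re λ₂`: the largest real part among the eigenvalues of `A` (counted with algebraic
multiplicity) after removing one copy of `λ₁ = b`. -/
def secondRe (A : Matrix (Fin q) (Fin q) ℂ) (b : ℝ) : ℝ :=
  letI : DecidableEq ℂ := Classical.decEq ℂ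
  sSup (Complex.re '' {μ : ℂ | μ ∈ A.charpoly.roots.erase (b : ℂ)})

/-- `ν_λ`: one less than the size of the largest Jordan block of `A` for `λ`, i.e. the least
`m` such that `ker (A - λ)^{m+1} = ker (A - λ)^{m+2}`. -/
def nuOf (A : Matrix (Fin q) (Fin q) ℂ) (μ : ℂ) : ℕ :=
  sInf {m : ℕ | LinearMap.ker (Matrix.mulVecLin ((A - μ • 1) ^ (m + 1))) =
      LinearMap.ker (Matrix.mulVecLin ((A - μ • 1) ^ (m + 2)))}

/-- `ν₂ = ν_{λ₂}`: the largest `ν_μ` among remaining eigenvalues `μ` with `Re μ = Re λ₂`. -/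
def secondNu (A : Matrix (Fin q) (Fin q) ℂ) (b : ℝ) : ℕ :=
  letI : DecidableEq ℂ := Classical.decEq ℂ
  sSup (nuOf A '' {μ : ℂ | μ ∈ A.charpoly.roots.erase (b : ℂ) ∧ μ.re = secondRe A b})

/-- The generalized eigenspace of a matrix `A` for `μ`, i.e. `ker (A - μ I)^q`. -/
def genEig (A : Matrix (Fin q) (Fin q) ℂ) (μ : ℂ) : Submodule ℂ (Fin q → ℂ) :=
  LinearMap.ker (Matrix.mulVecLin ((A - μ • 1) ^ q))

/-- `Pm` is the spectral projection of `A` for the eigenvalue `μ`: the projection onto the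
generalized eigenspace of `μ` along the sum of the generalized eigenspaces of the other
eigenvalues. -/
def IsSpectralProjection (A : Matrix (Fin q) (Fin q) ℂ) (μ : ℂ)
    (Pm : Matrix (Fin q) (Fin q) ℂ) : Prop :=
  Pm * Pm = Pm ∧
    LinearMap.range Pm.mulVecLin = genEig A μ ∧
    LinearMap.ker Pm.mulVecLin = ⨆ ν ∈ spectrum ℂ A \ {μ}, genEig A ν

/-- `ω_n = a·X₀ + n b`, the conditional expectation of the total activity. -/
def omegaSeq (a : Fin q → ℝ) (X₀ : E q) (b : ℝ) (n : ℕ) : ℝ := totAct a X₀ + n * b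

/-- The matrix product `F_{ℓ,n} = ∏_{ℓ ≤ k < n} (I + ω_k⁻¹ A)` (complex version). -/
def FprodC (A : Matrix (Fin q) (Fin q) ℂ) (w : ℕ → ℝ) (l n : ℕ) : Matrix (Fin q) (Fin q) ℂ :=
  (((List.range' l (n - l)).map fun k =>
      (1 : Matrix (Fin q) (Fin q) ℂ) + ((w k : ℂ))⁻¹ • A)).prod

/-- The matrix product `F_{ℓ,n} = ∏_{ℓ ≤ k < n} (I + ω_k⁻¹ A)` (real version). -/
def FprodR (A : Matrix (Fin q) (Fin q) ℝ) (w : ℕ → ℝ) (l n : ℕ) : Matrix (Fin q) (Fin q) ℝ :=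
  (((List.range' l (n - l)).map fun k =>
      (1 : Matrix (Fin q) (Fin q) ℝ) + (w k)⁻¹ • A)).prod

/-- The operator norm (w.r.t. Euclidean norms) of a complex matrix. -/
def opNorm (M : Matrix (Fin q) (Fin q) ℂ) : ℝ :=
  ‖LinearMap.toContinuousLinearMap (Matrix.toEuclideanLin M)‖

/-- The conditional expectation `E[X_n | E_n^c]` of the urn composition given
non-extinction up to time `n`. -/
def condMean (P : Measure Ω) (a : Fin q → ℝ) (X : ℕ → Ω → E q) (n : ℕ) : E q :=
  ∫ ω, X n ω ∂(P[|NE a X n])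

/-- The martingale difference part `Y_n = ΔX_{n-1} - E[ΔX_{n-1} | ℱ_{n-1}]`. -/
def Yseq (P : Measure Ω) (X : ℕ → Ω → E q) (n : ℕ) (ω : Ω) : E q :=
  ΔX X (n - 1) ω - (P[ΔX X (n - 1) | urnFiltration X (n - 1)]) ω

/-- The noise part `Z_n = ((ω_{n-1} - S_{n-1})/ω_{n-1}) E[ΔX_{n-1} | ℱ_{n-1}]`. -/
def Zseq (P : Measure Ω) (a : Fin q → ℝ) (X₀ : E q) (b : ℝ) (X : ℕ → Ω → E q)
    (n : ℕ) (ω : Ω) : E q :=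
  ((omegaSeq a X₀ b (n - 1) - Sproc a X (n - 1) ω) / omegaSeq a X₀ b (n - 1)) •
    (P[ΔX X (n - 1) | urnFiltration X (n - 1)]) ω

/-- `(Y_n)_{n ≥ 1}` is a martingale difference sequence for the filtration `ℱ`. -/
def IsMDSeq {V : Type*} [NormedAddCommGroup V] [NormedSpace ℝ V] [CompleteSpace V]
    (P : Measure Ω) (ℱ : ℕ → MeasurableSpace Ω) (Y : ℕ → Ω → V) : Prop :=
  ∀ n, 1 ≤ n → Integrable (Y n) P ∧ StronglyMeasurable[ℱ n] (Y n) ∧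
    P[Y n | ℱ (n - 1)] =ᵐ[P] 0

/-- `G` is a centered Gaussian measure on `ℝ^q` with covariance matrix `Sig`,
characterized through its characteristic function. -/
def IsCenteredGaussianWithCov (Sig : Matrix (Fin q) (Fin q) ℝ) (G : Measure (E q)) : Prop :=
  IsProbabilityMeasure G ∧
    ∀ t : E q, ∫ x, Complex.exp (Complex.I * ((∑ i, t i * x i : ℝ) : ℂ)) ∂G =
      Complex.exp (-(1 / 2 : ℂ) * ((∑ i, ∑ j, t i * Sig i j * t j : ℝ) : ℂ))

/-- Convergence in distribution of a sequence of (probability) measures on `ℝ^q`: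
integrals of every bounded continuous function converge. -/
def TendstoInDistribution (μs : ℕ → Measure (E q)) (G : Measure (E q)) : Prop :=
  ∀ f : BoundedContinuousFunction (E q) ℝ,
    Tendsto (fun n => ∫ x, f x ∂(μs n)) atTop (𝓝 (∫ x, f x ∂G))

/-- Multiplication of a real matrix with a vector in `ℝ^q` (Euclidean). -/
def mulVecE {q : ℕ} (M : Matrix (Fin q) (Fin q) ℝ) (v : E q) : E q :=
  WithLp.toLp 2 fun i => ∑ j, M i j * v j

/-- Multiplication of a complex matrix with a vector in `ℂ^q` (Euclidean). -/
def mulVecEC {q : ℕ} (M : Matrix (Fin q) (Fin q) ℂ) (v : EC q) : EC q :=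
  WithLp.toLp 2 fun i => ∑ j, M i j * v j

/-- The algebraic multiplicity of `μ` as an eigenvalue of `A` (as a root of the
characteristic polynomial). -/
def algMult {q : ℕ} (A : Matrix (Fin q) (Fin q) ℂ) (μ : ℂ) : ℕ :=
  letI : DecidableEq ℂ := Classical.decEq ℂ
  A.charpoly.roots.count μ

end PolyaUrnPaper


open PolyaUrnPaper MeasureTheory ProbabilityTheory Filter Matrix Polynomial

namespace PolyaUrnPaper

/-- The intensity matrix of the urn of outdegrees (up to `K`) of uniform attachment trees
with freezing, with activation probability `p` (0-indexed version of the matrix `A` of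
Section 6.1). -/
def freezeMatrix (p : ℝ) (K : ℕ) : Matrix (Fin (2 * K + 2)) (Fin (2 * K + 2)) ℝ :=
  Matrix.of fun i j =>
    if j.val = 0 then
      (if i.val = 0 then p - 1 else if i.val = 1 then 1 - p else if i.val = 2 then p else 0)
    else if j.val % 2 = 0 ∧ j.val < 2 * K then
      (if i.val = 0 then p else 0) + (if i.val = j.val then -1 else 0) +
        (if i.val = j.val + 1 then 1 - p else 0) + (if i.val = j.val + 2 then p else 0)
    else if j.val = 2 * K then
      (if i.val = 0 then p else 0) + (if i.val = 2 * K then -(1 - p) else 0) +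
        (if i.val = 2 * K + 1 then 1 - p else 0)
    else 0

/-- The activity vector of the freezing urn: odd (paper) colours, i.e. even 0-based
indices, are active with activity `1`; frozen colours have activity `0`. -/
def freezeAct (K : ℕ) : Fin (2 * K + 2) → ℝ := fun j => if j.val % 2 = 0 then 1 else 0

/-- The right eigenvector `v₁` of `freezeMatrix p K` for the eigenvalue `2p - 1`,
normalized by `a · v₁ = 1`. -/
def freezeV (p : ℝ) (K : ℕ) : E (2 * K + 2) := WithLp.toLp 2 fun (j : Fin (2 * K + 2)) =>
  if j.val % 2 = 0 then
    (if j.val = 2 * K then (1 : ℝ) / 2 ^ K else 1 / 2 ^ (j.val / 2 + 1))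
  else
    (if j.val = 2 * K + 1 then (1 - p) / ((2 * p - 1) * 2 ^ K)
     else (1 - p) / ((2 * p - 1) * 2 ^ (j.val / 2 + 1)))

end PolyaUrnPaper

/-! Order the colours as active (even index) and frozen (odd index). The columns of frozen colours
vanish, so the intensity matrix is block lower triangular with a zero block of size `K + 1` and the
active block `p • J - 1`, where column `j` of `J` is `e₀ + e_{min (j + 1) K}`. Every column of the
active block sums to `2p - 1`, so replacing the first row of its characteristic matrix by the sum of
all rows splits off the factor `λ - (2p - 1)`; what is left is a row of ones above a lower
bidiagonal matrix, and expanding along the first column gives `(λ + 1)^K` by induction on `K`. -/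

namespace Matrix

variable {R : Type*} [CommRing R]

theorem det_eq_mul_det_updateRow_one {n : Type*} [Fintype n] [DecidableEq n]
    (M : Matrix n n R) {c : R} (hM : ∀ j, ∑ i, M i j = c) (i₀ : n) :
    M.det = c * (M.updateRow i₀ fun _ => 1).det := by
  have hsum := det_updateRow_sum M i₀ fun _ => 1
  have hrows : ∑ k, M k = c • fun _ => 1 := by
    ext j
    exact (Finset.sum_apply j _ _).trans (by simp [hM])
  simp only [one_smul, hrows, det_updateRow_smul] at hsum
  exact hsum.symm

theorem charpoly_eq_mul_det_updateRow_one {n : Type*} [Fintype n] [DecidableEq n]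
    (M : Matrix n n R) {c : R} (hM : ∀ j, ∑ i, M i j = c) (i₀ : n) :
    M.charpoly = (X - C c) * ((charmatrix M).updateRow i₀ fun _ => 1).det := by
  refine det_eq_mul_det_updateRow_one _ (fun j => ?_) i₀
  simp [charmatrix_apply, Finset.sum_sub_distrib, ← map_sum, hM, diagonal_apply]

end Matrix

section OnesRowBidiag

variable {R : Type*} [CommRing R]

def onesRowBidiag (w v : R) (n : ℕ) : Matrix (Fin (n + 1)) (Fin (n + 1)) R :=
  of fun i j =>
    if i.val = 0 then 1
    else if i.val = j.val + 1 then w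
    else if i.val = j.val then (if i.val = n then v + w else v)
    else 0

theorem det_onesRowBidiag (w v : R) (n : ℕ) : (onesRowBidiag w v n).det = v ^ n := by
  induction n with
  | zero => simp [onesRowBidiag, det_unique]
  | succ n ih =>
    have hdiag : ((onesRowBidiag w v (n + 1)).submatrix Fin.succ Fin.succ).det =
        v ^ n * (v + w) := by
      rw [det_of_isLowerTriangular]
      · rw [Fin.prod_univ_castSucc]
        simp [onesRowBidiag, fun x : Fin n => x.is_lt.ne]
      · intro i j hij
        have : i.val < j.val := hij
        simp only [onesRowBidiag, submatrix_apply, of_apply, Fin.val_succ]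
        rw [if_neg, if_neg, if_neg] <;> omega
    have hminor : (onesRowBidiag w v (n + 1)).submatrix (Fin.succAbove 1) Fin.succ =
        onesRowBidiag w v n := by
      ext i j
      refine Fin.cases ?_ (fun k => ?_) i
      · simp [onesRowBidiag]
      · rw [← Fin.succ_zero_eq_one, submatrix_apply, Fin.succ_succAbove_succ, Fin.succAbove_zero]
        simp [onesRowBidiag]
    rw [det_succ_column_zero, Fin.sum_univ_succ, Fin.sum_univ_succ, Fin.succAbove_zero, hdiag,
      Fin.succ_zero_eq_one, hminor, ih]
    simp [onesRowBidiag]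
    ring

end OnesRowBidiag

namespace PolyaUrnPaper

def activeMatrix (p : ℝ) (K : ℕ) : Matrix (Fin (K + 1)) (Fin (K + 1)) ℝ :=
  p • of (fun i j => (if i.val = 0 then 1 else 0) + if i.val = min (j.val + 1) K then 1 else 0) - 1

theorem sum_activeMatrix_apply (p : ℝ) (K : ℕ) (j : Fin (K + 1)) :
    ∑ i, activeMatrix p K i j = 2 * p - 1 := by
  have hmin : ∀ i : Fin (K + 1), i.val = min (j.val + 1) K ↔ i = ⟨min (j.val + 1) K, by omega⟩ :=
    fun i => by simp [Fin.ext_iff]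
  simp [activeMatrix, Finset.sum_sub_distrib, ← Finset.mul_sum, Finset.sum_add_distrib, hmin,
    one_apply]
  ring

theorem charmatrix_activeMatrix_updateRow_zero (p : ℝ) (K : ℕ) :
    (charmatrix (activeMatrix p K)).updateRow 0 (fun _ => 1) = onesRowBidiag (-C p) (X + 1) K := by
  refine Matrix.ext fun i j => ?_
  refine Fin.cases ?_ (fun i => ?_) i
  · simp [onesRowBidiag]
  · rw [updateRow_ne (Fin.succ_ne_zero i)]
    simp only [charmatrix_apply, activeMatrix, onesRowBidiag, diagonal_apply, Matrix.sub_apply,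
      Matrix.smul_apply, of_apply, one_apply, Fin.ext_iff, Fin.val_succ, smul_eq_mul]
    split_ifs <;> first | (exfalso; omega) | (simp; ring) | simp

theorem charpoly_activeMatrix (p : ℝ) (K : ℕ) :
    (activeMatrix p K).charpoly = (X - C (2 * p - 1)) * (X + 1) ^ K := by
  rw [charpoly_eq_mul_det_updateRow_one _ (sum_activeMatrix_apply p K) 0,
    charmatrix_activeMatrix_updateRow_zero, det_onesRowBidiag]

def evenOddEquiv (K : ℕ) : Fin (K + 1) ⊕ Fin (K + 1) ≃ Fin (2 * K + 2) :=
  Equiv.ofBijective (Sum.elim (fun m => ⟨2 * m, by omega⟩) fun m => ⟨2 * m + 1, by omega⟩) <| by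
    refine (Fintype.bijective_iff_injective_and_card _).2 ⟨?_, by simp; ring⟩
    rintro (a | a) (b | b) h <;> simp [Fin.ext_iff] at h ⊢ <;> omega

theorem freezeMatrix_apply_odd (p : ℝ) (K : ℕ) (i : Fin (2 * K + 2)) (m : Fin (K + 1)) :
    freezeMatrix p K i (evenOddEquiv K (Sum.inr m)) = 0 := by
  simp only [freezeMatrix, evenOddEquiv, Equiv.ofBijective_apply, Sum.elim_inr, of_apply]
  split_ifs <;> first | rfl | contradiction | omega

theorem freezeMatrix_apply_even_even (p : ℝ) {K : ℕ} (hK : 1 ≤ K) (i j : Fin (K + 1)) :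
    freezeMatrix p K (evenOddEquiv K (Sum.inl i)) (evenOddEquiv K (Sum.inl j)) =
      activeMatrix p K i j := by
  simp only [freezeMatrix, activeMatrix, evenOddEquiv, Equiv.ofBijective_apply, Sum.elim_inl,
    of_apply, Matrix.sub_apply, Matrix.smul_apply, one_apply, Fin.ext_iff, smul_eq_mul]
  split_ifs <;> first | (exfalso; omega) | ring

theorem freezeMatrix_submatrix_evenOddEquiv (p : ℝ) {K : ℕ} (hK : 1 ≤ K) :
    (freezeMatrix p K).submatrix (evenOddEquiv K) (evenOddEquiv K) =
      fromBlocks (activeMatrix p K) 0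
        ((freezeMatrix p K).submatrix (evenOddEquiv K ∘ Sum.inr) (evenOddEquiv K ∘ Sum.inl)) 0 := by
  ext (i | i) (j | j) <;>
    simp [freezeMatrix_apply_even_even p hK, freezeMatrix_apply_odd]

theorem charpoly_freezeMatrix (p : ℝ) {K : ℕ} (hK : 1 ≤ K) :
    (freezeMatrix p K).charpoly = X ^ (K + 1) * (X + 1) ^ K * (X - C (2 * p - 1)) := by
  rw [← charpoly_reindex (evenOddEquiv K).symm, reindex_apply, Equiv.symm_symm,
    freezeMatrix_submatrix_evenOddEquiv p hK, charpoly_fromBlocks_zero₁₂, charpoly_activeMatrix,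
    charpoly_zero, Fintype.card_fin]
  ring

end PolyaUrnPaper

theorem Polynomial.roots_X_pow_mul_X_add_one_pow_mul_X_sub_C {R : Type*} [CommRing R]
    [IsDomain R] (a b : ℕ) (c : R) :
    (X ^ a * (X + 1) ^ b * (X - C c) : R[X]).roots = a • {0} + b • {-1} + {c} := by
  have hX1 : (X + 1 : R[X]) = X - C (-1) := by simp
  rw [hX1, roots_mul, roots_mul, roots_pow, roots_pow, roots_X, roots_X_sub_C, roots_X_sub_C]
  · exact mul_ne_zero (pow_ne_zero _ X_ne_zero) (pow_ne_zero _ (X_sub_C_ne_zero _))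
  · exact mul_ne_zero (mul_ne_zero (pow_ne_zero _ X_ne_zero) (pow_ne_zero _ (X_sub_C_ne_zero _)))
      (X_sub_C_ne_zero _)

theorem freezeMatrix_charpoly_general (K : ℕ) (hK : 1 ≤ K) (p : ℝ) :
    (freezeMatrix p K).charpoly =
      Polynomial.X ^ (K + 1) * (Polynomial.X + 1) ^ K *
        (Polynomial.X - Polynomial.C (2 * p - 1)) ∧
    (p ≠ 1 / 2 → p ≠ 0 →
      ((freezeMatrix p K).charpoly.roots.count (2 * p - 1) = 1 ∧
       (freezeMatrix p K).charpoly.roots.count 0 = K + 1 ∧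
       (freezeMatrix p K).charpoly.roots.count (-1) = K)) := by
  refine ⟨charpoly_freezeMatrix p hK, fun hp2 hp0 => ?_⟩
  have hc0 : 2 * p - 1 ≠ 0 := fun h => hp2 (by linarith)
  have hc1 : 2 * p - 1 ≠ -1 := fun h => hp0 (by linarith)
  rw [charpoly_freezeMatrix p hK, roots_X_pow_mul_X_add_one_pow_mul_X_sub_C]
  simp [hc0, hc1, hc0.symm, hc1.symm]

/-- **From the proof of Proposition 6.1:** the characteristic polynomial of the intensity
matrix of the freezing urn is `λ^{K+1} (λ+1)^K (λ - (2p-1))`; in particular its eigenvalues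
are `2p-1` (simple when `p ≠ 1/2` and `p ≠ 0`), `0` with algebraic multiplicity `K+1`,
and `-1` with algebraic multiplicity `K`. -/
theorem freezeMatrix_charpoly (K : ℕ) (hK : 1 ≤ K) (p : ℝ) (hp : p ∈ Set.Ioc (0 : ℝ) 1) :
    (freezeMatrix p K).charpoly =
      Polynomial.X ^ (K + 1) * (Polynomial.X + 1) ^ K *
        (Polynomial.X - Polynomial.C (2 * p - 1)) ∧
    (p ≠ 1 / 2 → p ≠ 0 →
      ((freezeMatrix p K).charpoly.roots.count (2 * p - 1) = 1 ∧
       (freezeMatrix p K).charpoly.roots.count 0 = K + 1 ∧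
       (freezeMatrix p K).charpoly.roots.count (-1) = K)) :=
  freezeMatrix_charpoly_general K hK p
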